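/- Consider the channels on input alphabet {0,1}² defined as follows: W_b outputs t = x + y + N1 in GF(3) and W_e outputs z = 2x − 2y + N2 in {−2,…,3}, where N1, N2 are independent and uniform on {0,1}. If X = Y is uniform on {0,1} (inputs perfectly correlated), then I(Z ∧ XY) = 0 while I(T ∧ XY) = 1/2. -/

import Mathlib

open scoped BigOperators

noncomputable def entropy {A : Type} [Fintype A] (p : A → ℝ) : ℝ :=
  -∑ a, p a * Real.logb 2 (p a)

noncomputable def mutualInfo {A B : Type} [Fintype A] [Fintype B]
    (p : A × B → ℝ) : ℝ :=
  entropy (fun a => ∑ b, p (a, b)) + entropy (fun b => ∑ a, p (a, b)) - entropy p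

/-- Bob's channel: `t = x + y + N1` in `GF(3)`, `N1` uniform on `{0,1}`. -/
noncomputable def WbEx (x y : Fin 2) (t : ZMod 3) : ℝ :=
  (1 / 2) * ((if t = ((x.val + y.val : ℕ) : ZMod 3) then 1 else 0) +
    (if t = ((x.val + y.val + 1 : ℕ) : ZMod 3) then 1 else 0))

/-- Eve's channel: `z = 2x − 2y + N2 ∈ {−2,…,3}`, `N2` uniform on `{0,1}`;
the output alphabet is encoded as `Fin 6` with value `z.val − 2 ∈ {−2,…,3}`. -/
noncomputable def WeEx (x y : Fin 2) (z : Fin 6) : ℝ :=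
  (1 / 2) * ((if (z.val : ℤ) - 2 = 2 * (x.val : ℤ) - 2 * (y.val : ℤ) then 1 else 0) +
    (if (z.val : ℤ) - 2 = 2 * (x.val : ℤ) - 2 * (y.val : ℤ) + 1 then 1 else 0))

/-- Perfectly correlated uniform inputs: `X = Y` uniform on `{0,1}`. -/
noncomputable def pCorr (xy : Fin 2 × Fin 2) : ℝ :=
  if xy.1 = xy.2 then 1 / 2 else 0

/-!
For a joint law `f a * W a b` with `W` stochastic, the chain rule `H(A, B) = H(A) + ∑ f a H(W a)`
gives `I(A ∧ B) = H(B) - ∑ f a H(W a)`. Both channels spread every input over two outputs with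
probability `1/2` each, so the conditional term is `1`. With `X = Y`, Eve sees `z = N2`, uniform on
`{0, 1}`, so `H(Z) = 1`; Bob sees `t = 0` with probability `1/2` and `t = 1, 2` with probability
`1/4` each, so `H(T) = 3/2`.
-/

open Real

lemma entropy_eq_sum_negMulLog {A : Type} [Fintype A] (p : A → ℝ) :
    entropy p = (∑ a, negMulLog (p a)) / log 2 := by
  simp only [entropy, negMulLog, logb, Finset.sum_div, ← Finset.sum_neg_distrib]
  congr 1 with a
  ring

lemma entropy_mul_channel {A B : Type} [Fintype A] [Fintype B] (f : A → ℝ) (W : A → B → ℝ)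
    (hW : ∀ a, ∑ b, W a b = 1) :
    entropy (fun p : A × B => f p.1 * W p.1 p.2) = entropy f + ∑ a, f a * entropy (W a) := by
  simp only [entropy_eq_sum_negMulLog, negMulLog_mul, Fintype.sum_prod_type,
    Finset.sum_add_distrib, ← Finset.sum_mul, ← Finset.mul_sum, hW, one_mul, add_div]
  simp only [Finset.sum_div, mul_div_assoc]

lemma mutualInfo_mul_channel {A B : Type} [Fintype A] [Fintype B] (f : A → ℝ) (W : A → B → ℝ)
    (hW : ∀ a, ∑ b, W a b = 1) :
    mutualInfo (fun p : A × B => f p.1 * W p.1 p.2)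
      = entropy (fun b => ∑ a, f a * W a b) - ∑ a, f a * entropy (W a) := by
  have hmarg : (fun a => ∑ b, f a * W a b) = f :=
    funext fun a => by rw [← Finset.mul_sum, hW, mul_one]
  rw [mutualInfo, entropy_mul_channel f W hW]
  simp only [hmarg]
  ring

lemma logb_two_half : logb 2 (1 / 2) = -1 := by
  rw [one_div, logb_inv, logb_self_eq_one one_lt_two]

lemma logb_two_quarter : logb 2 (1 / 4) = -2 := by
  rw [show (1 / 4 : ℝ) = 1 / 2 * (1 / 2) by norm_num, logb_mul (by norm_num) (by norm_num),
    logb_two_half]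
  norm_num

lemma ZMod.sum_three {M : Type*} [AddCommMonoid M] (f : ZMod 3 → M) :
    ∑ t, f t = f 0 + f 1 + f 2 :=
  Fin.sum_univ_three f

lemma sum_WeEx (x y : Fin 2) : ∑ z, WeEx x y z = 1 := by
  fin_cases x <;> fin_cases y <;> norm_num [WeEx, Fin.sum_univ_succ]

lemma sum_WbEx (x y : Fin 2) : ∑ t, WbEx x y t = 1 := by
  fin_cases x <;> fin_cases y <;> norm_num +decide [WbEx, ZMod.sum_three]

lemma entropy_WeEx (x y : Fin 2) : entropy (WeEx x y) = 1 := by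
  fin_cases x <;> fin_cases y <;> norm_num [entropy, WeEx, Fin.sum_univ_succ, logb_two_half]

lemma entropy_WbEx (x y : Fin 2) : entropy (WbEx x y) = 1 := by
  fin_cases x <;> fin_cases y <;> norm_num +decide [entropy, WbEx, ZMod.sum_three, logb_two_half]

lemma sum_pCorr : ∑ a, pCorr a = 1 := by
  simp [pCorr, Fintype.sum_prod_type]

lemma entropy_output_WeEx_pCorr : entropy (fun z => ∑ a, pCorr a * WeEx a.1 a.2 z) = 1 := by
  norm_num [entropy, Fintype.sum_prod_type, Fin.sum_univ_succ, WeEx, pCorr, logb_two_half]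

lemma entropy_output_WbEx_pCorr : entropy (fun t => ∑ a, pCorr a * WbEx a.1 a.2 t) = 3 / 2 := by
  norm_num +decide [entropy, Fintype.sum_prod_type, Fin.sum_univ_succ, ZMod.sum_three, WbEx, pCorr,
    logb_two_half, logb_two_quarter]

/-- with perfectly correlated inputs, `I(Z ∧ XY) = 0` while
`I(T ∧ XY) = 1/2`. -/
theorem stmt9 :
    mutualInfo (fun p : (Fin 2 × Fin 2) × Fin 6 => pCorr p.1 * WeEx p.1.1 p.1.2 p.2) = 0 ∧
    mutualInfo (fun p : (Fin 2 × Fin 2) × ZMod 3 => pCorr p.1 * WbEx p.1.1 p.1.2 p.2)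
      = 1 / 2 := by
  constructor
  · rw [mutualInfo_mul_channel pCorr (fun a => WeEx a.1 a.2) fun a => sum_WeEx a.1 a.2]
    simp only [entropy_WeEx, mul_one, sum_pCorr, entropy_output_WeEx_pCorr, sub_self]
  · rw [mutualInfo_mul_channel pCorr (fun a => WbEx a.1 a.2) fun a => sum_WbEx a.1 a.2]
    simp only [entropy_WbEx, mul_one, sum_pCorr, entropy_output_WbEx_pCorr]
    norm_num
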